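/- Let R be a commutative ring, d ≥ 1, and let R' = R[u] be the polynomial ring in one variable u over R. Let χ = c·u with c a non-zero-divisor of R, viewed inside R'[x₁,…,x_m] (for some m), and let α₁, …, α_d be elements of R[x₁,…,x_m]. Then the product ∏_{i=1}^{d}(χ + α_i) is a non-zero-divisor in R'[x₁,…,x_m]. -/

import Mathlib

open MvPolynomial

/-- The equivalence `R[u][x₁,…,x_m] ≃ (R[x₁,…,x_m])[u]`. -/
noncomputable def eulerAux (R : Type*) [CommRing R] (m : ℕ) :
    MvPolynomial (Fin m) (Polynomial R) ≃+* Polynomial (MvPolynomial (Fin m) R) :=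
  ((optionEquivRight R (Fin m)).symm.trans (optionEquivLeft R (Fin m))).toRingEquiv

lemma eulerAux_C_mul_X {R : Type*} [CommRing R] (m : ℕ) (c : R) :
    eulerAux R m (MvPolynomial.C (Polynomial.C c * Polynomial.X)) =
      Polynomial.C (MvPolynomial.C c) * Polynomial.X := by
  simp [eulerAux, optionEquivRight, optionEquivLeft_C, optionEquivLeft_X_none, map_mul]

lemma eulerAux_map {R : Type*} [CommRing R] (m : ℕ) (β : MvPolynomial (Fin m) R) :
    eulerAux R m (MvPolynomial.map (Polynomial.C : R →+* Polynomial R) β) =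
      Polynomial.C β := by
  have : ((eulerAux R m : MvPolynomial (Fin m) (Polynomial R) →+* _).comp
      (MvPolynomial.map (Polynomial.C : R →+* Polynomial R))) =
      (Polynomial.C : MvPolynomial (Fin m) R →+* _) := by
    apply MvPolynomial.ringHom_ext
    · intro r
      simp [eulerAux, optionEquivRight, optionEquivLeft_C]
    · intro i
      simp [eulerAux, optionEquivRight, optionEquivLeft_X_some]
  exact RingHom.congr_fun this β

lemma eulerAux_C_nonZeroDivisor {R : Type*} [CommRing R] (m : ℕ) {c : R}
    (hc : c ∈ nonZeroDivisors R) :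
    (MvPolynomial.C c : MvPolynomial (Fin m) R) ∈
      nonZeroDivisors (MvPolynomial (Fin m) R) := by
  rw [mem_nonZeroDivisors_iff_right]
  intro p hp
  rw [mul_comm] at hp
  ext s
  have := congrArg (MvPolynomial.coeff s) hp
  rw [MvPolynomial.coeff_C_mul, MvPolynomial.coeff_zero] at this
  rw [MvPolynomial.coeff_zero]
  exact hc.2 _ (by rwa [mul_comm] at this)

lemma euler_factor_nonZeroDivisor {R : Type*} [CommRing R] (m : ℕ) {c : R}
    (hc : c ∈ nonZeroDivisors R) (β : MvPolynomial (Fin m) R) :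
    (MvPolynomial.C (Polynomial.C c * Polynomial.X) +
        MvPolynomial.map (Polynomial.C : R →+* Polynomial R) β) ∈
      nonZeroDivisors (MvPolynomial (Fin m) (Polynomial R)) := by
  rcases subsingleton_or_nontrivial R with h | h
  · rw [mem_nonZeroDivisors_iff_right]
    intro x _
    exact Subsingleton.elim x 0
  -- transfer along the iso to `(R[x])[u]`
  rw [mem_nonZeroDivisors_iff_right]
  intro p hp
  have h2 : eulerAux R m p *
      (Polynomial.C (MvPolynomial.C c) * Polynomial.X + Polynomial.C β) = 0 := by
    have := congrArg (eulerAux R m) hp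
    rw [map_mul, map_add, eulerAux_C_mul_X, eulerAux_map, map_zero] at this
    exact this
  have hCc : (MvPolynomial.C c : MvPolynomial (Fin m) R) ≠ 0 := by
    simpa using nonZeroDivisors.ne_zero (eulerAux_C_nonZeroDivisor m hc)
  have hlead : (Polynomial.C (MvPolynomial.C c) * Polynomial.X +
      Polynomial.C β).leadingCoeff = MvPolynomial.C c :=
    Polynomial.leadingCoeff_linear hCc
  have hnzd := Polynomial.mem_nonZeroDivisors_of_leadingCoeff
    (p := Polynomial.C (MvPolynomial.C c) * Polynomial.X + Polynomial.C β)
    (by rw [hlead]; exact eulerAux_C_nonZeroDivisor m hc)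
  have : eulerAux R m p = 0 := hnzd.2 _ h2
  have := congrArg (eulerAux R m).symm this
  simpa using this

/-- Algebraic model of the Atiyah–Bott non-zero-divisor argument: let `R` be a
commutative ring, `R' = R[u]` a polynomial ring, and work in `R'[x₁,…,x_m]`
(modelled as `MvPolynomial (Fin m) (Polynomial R)`).  Let `χ = c·u` with `c` a
non-zero-divisor of `R`, and let `α₁, …, α_d` (`d ≥ 1`) be elements of the subring
`R[x₁,…,x_m]` (the image of `MvPolynomial (Fin m) R`).  Then `∏ i, (χ + αᵢ)` is a
non-zero-divisor in `R'[x₁,…,x_m]`. -/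
theorem euler_class_nonZeroDivisor {R : Type*} [CommRing R] (m d : ℕ) (hd : 1 ≤ d)
    (c : R) (hc : c ∈ nonZeroDivisors R)
    (α : Fin d → MvPolynomial (Fin m) (Polynomial R))
    (hα : ∀ i, α i ∈ Set.range
      (MvPolynomial.map (Polynomial.C : R →+* Polynomial R) :
        MvPolynomial (Fin m) R → MvPolynomial (Fin m) (Polynomial R))) :
    (∏ i, (MvPolynomial.C (Polynomial.C c * Polynomial.X) + α i)) ∈
      nonZeroDivisors (MvPolynomial (Fin m) (Polynomial R)) := by
  refine Submonoid.prod_mem _ fun i _ => ?_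
  obtain ⟨β, hβ⟩ := hα i
  rw [← hβ]
  exact euler_factor_nonZeroDivisor m hc β
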